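/- The two parametrizations of Bertrand's problem give different answers: with the rectangle parametrization the probability that a random chord is shorter than √3 is 2/3, while with the midpoint parametrization it is 3/4, and 2/3 ≠ 3/4. -/

import Mathlib

/-!
In the rectangle parametrization the chord with inclination θ has length 2 cos θ, which is
below √3 exactly when θ > π / 6: a sub-rectangle carrying 2/3 of the area. In the midpoint
parametrization the chord with midpoint p has length 2 √(1 - ‖p‖²), which is below √3 exactly
when ‖p‖ > 1/2: the annulus 1/2 < ‖p‖ < 1, of area 3π/4. Disc areas in ℝ × ℝ are computed by
transporting Euclidean balls from ℂ.
-/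

open Real MeasureTheory

lemma two_mul_cos_lt_sqrt_three_iff {θ : ℝ} (h₀ : 0 ≤ θ) (hπ : θ ≤ π) :
    2 * cos θ < √3 ↔ π / 6 < θ := by
  have h6 : π / 6 ∈ Set.Icc 0 π := ⟨by positivity, by linarith [pi_pos]⟩
  rw [← strictAntiOn_cos.lt_iff_gt ⟨h₀, hπ⟩ h6, cos_pi_div_six]
  constructor <;> intro h <;> linarith

lemma two_mul_sqrt_one_sub_lt_sqrt_three_iff (s : ℝ) : 2 * √(1 - s) < √3 ↔ 1 / 4 < s := by
  have h4 : 2 * √(1 - s) = √(4 * (1 - s)) := by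
    rw [sqrt_mul (by norm_num), show (4 : ℝ) = 2 ^ 2 by norm_num, sqrt_sq (by norm_num)]
  rw [h4, sqrt_lt_sqrt_iff_of_pos (by norm_num)]
  constructor <;> intro h <;> linarith

lemma sum_sq_eq_norm_sq (p : ℝ × ℝ) :
    p.1 ^ 2 + p.2 ^ 2 = ‖Complex.measurableEquivRealProd.symm p‖ ^ 2 := by
  rw [Complex.sq_norm, Complex.normSq_apply]
  simp [Complex.measurableEquivRealProd, sq]

lemma volume_preimage_realProd_symm {s : Set ℂ} (hs : MeasurableSet s) :
    volume (Complex.measurableEquivRealProd.symm ⁻¹' s) = volume s :=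
  Complex.volume_preserving_equiv_real_prod.symm.measure_preimage hs.nullMeasurableSet

lemma ofReal_sqrt_sq_mul_pi {c : ℝ} (hc : 0 ≤ c) :
    ENNReal.ofReal √c ^ 2 * NNReal.pi = ENNReal.ofReal (π * c) := by
  rw [← ENNReal.ofReal_pow (sqrt_nonneg c), sq_sqrt hc, ← ENNReal.ofReal_coe_nnreal,
    NNReal.coe_real_pi, ← ENNReal.ofReal_mul hc, mul_comm]

lemma volume_setOf_sum_sq_lt {c : ℝ} (hc : 0 ≤ c) :
    volume {p : ℝ × ℝ | p.1 ^ 2 + p.2 ^ 2 < c} = ENNReal.ofReal (π * c) := by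
  have hball : {p : ℝ × ℝ | p.1 ^ 2 + p.2 ^ 2 < c} =
      Complex.measurableEquivRealProd.symm ⁻¹' Metric.ball 0 √c := by
    ext p
    simp [sum_sq_eq_norm_sq, lt_sqrt (norm_nonneg _)]
  rw [hball, volume_preimage_realProd_symm measurableSet_ball, Complex.volume_ball,
    ofReal_sqrt_sq_mul_pi hc]

lemma volume_setOf_sum_sq_le {c : ℝ} (hc : 0 ≤ c) :
    volume {p : ℝ × ℝ | p.1 ^ 2 + p.2 ^ 2 ≤ c} = ENNReal.ofReal (π * c) := by
  have hball : {p : ℝ × ℝ | p.1 ^ 2 + p.2 ^ 2 ≤ c} =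
      Complex.measurableEquivRealProd.symm ⁻¹' Metric.closedBall 0 √c := by
    ext p
    simp [sum_sq_eq_norm_sq, le_sqrt (norm_nonneg _) hc]
  rw [hball, volume_preimage_realProd_symm measurableSet_closedBall, Complex.volume_closedBall,
    ofReal_sqrt_sq_mul_pi hc]

lemma volume_setOf_sum_sq_mem_Ioo {a b : ℝ} (ha : 0 ≤ a) (hab : a < b) :
    volume {p : ℝ × ℝ | a < p.1 ^ 2 + p.2 ^ 2 ∧ p.1 ^ 2 + p.2 ^ 2 < b} =
      ENNReal.ofReal (π * (b - a)) := by
  have hannulus : {p : ℝ × ℝ | a < p.1 ^ 2 + p.2 ^ 2 ∧ p.1 ^ 2 + p.2 ^ 2 < b} =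
      {p : ℝ × ℝ | p.1 ^ 2 + p.2 ^ 2 < b} \ {p | p.1 ^ 2 + p.2 ^ 2 ≤ a} := by
    ext p
    simp [and_comm]
  have hsub : {p : ℝ × ℝ | p.1 ^ 2 + p.2 ^ 2 ≤ a} ⊆ {p | p.1 ^ 2 + p.2 ^ 2 < b} :=
    fun _ hp => lt_of_le_of_lt hp hab
  rw [hannulus, measure_sdiff hsub ?_ ?_,
    volume_setOf_sum_sq_lt (ha.trans hab.le), volume_setOf_sum_sq_le ha,
    ← ENNReal.ofReal_sub _ (by positivity), mul_sub]
  · exact (measurableSet_le (by fun_prop) measurable_const).nullMeasurableSet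
  · rw [volume_setOf_sum_sq_le ha]; exact ENNReal.ofReal_ne_top

lemma rectangle_chord_lt_sqrt_three_eq :
    {p : ℝ × ℝ | p ∈ Set.Ioc (0 : ℝ) (2 * π) ×ˢ Set.Ioc (0 : ℝ) (π / 2) ∧ 2 * cos p.2 < √3} =
      Set.Ioc 0 (2 * π) ×ˢ Set.Ioc (π / 6) (π / 2) := by
  ext ⟨φ, θ⟩
  simp only [Set.mem_ofPred_eq, Set.mem_prod, Set.mem_Ioc]
  constructor
  · rintro ⟨⟨hφ, hθ₀, hθ⟩, hcos⟩
    exact ⟨hφ, (two_mul_cos_lt_sqrt_three_iff hθ₀.le (by linarith [pi_pos])).1 hcos, hθ⟩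
  · rintro ⟨hφ, hθ₀, hθ⟩
    have hθ_pos : 0 < θ := lt_trans (by positivity) hθ₀
    exact ⟨⟨hφ, hθ_pos, hθ⟩,
      (two_mul_cos_lt_sqrt_three_iff hθ_pos.le (by linarith [pi_pos])).2 hθ₀⟩

lemma disc_chord_lt_sqrt_three_eq :
    {p : ℝ × ℝ | p.1 ^ 2 + p.2 ^ 2 < 1 ∧ 2 * √(1 - p.1 ^ 2 - p.2 ^ 2) < √3} =
      {p | 1 / 4 < p.1 ^ 2 + p.2 ^ 2 ∧ p.1 ^ 2 + p.2 ^ 2 < 1} := by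
  ext p
  simp only [Set.mem_ofPred_eq, sub_sub, two_mul_sqrt_one_sub_lt_sqrt_three_iff, and_comm]

theorem bertrand_paradox :
    ((volume {p : ℝ × ℝ | p ∈ Set.Ioc (0 : ℝ) (2 * π) ×ˢ Set.Ioc (0 : ℝ) (π / 2) ∧
        2 * Real.cos p.2 < Real.sqrt 3}) / ENNReal.ofReal (π^2) = 2 / 3)
    ∧ ((volume {p : ℝ × ℝ | p.1^2 + p.2^2 < 1 ∧
        2 * Real.sqrt (1 - p.1^2 - p.2^2) < Real.sqrt 3}) / ENNReal.ofReal π = 3 / 4)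
    ∧ (2 / 3 : ENNReal) ≠ 3 / 4 := by
  refine ⟨?_, ?_, ?_⟩
  · have hratio : (2 * π - 0) * (π / 2 - π / 6) / π ^ 2 = 2 / 3 := by field_simp; ring
    rw [rectangle_chord_lt_sqrt_three_eq, Measure.volume_eq_prod, Measure.prod_prod,
      Real.volume_Ioc, Real.volume_Ioc, ← ENNReal.ofReal_mul (by linarith [pi_pos]),
      ← ENNReal.ofReal_div_of_pos (pow_pos pi_pos 2), hratio, ENNReal.ofReal_div_of_pos three_pos]
    norm_num
  · have hratio : π * (1 - 1 / 4) / π = 3 / 4 := by field_simp; ring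
    rw [disc_chord_lt_sqrt_three_eq, volume_setOf_sum_sq_mem_Ioo (by norm_num) (by norm_num),
      ← ENNReal.ofReal_div_of_pos pi_pos, hratio, ENNReal.ofReal_div_of_pos four_pos]
    norm_num
  · rw [Ne, ENNReal.div_eq_div_iff] <;> norm_num
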